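/- arXiv:1101.1132 — 5 statements merged into one kernel-verified Lean document; each statement's English description precedes it below -/
import Mathlib

section
/- The integral of K'(x)^2 over [0,1] equals twice the integral of K(x)^2 over [0,1], i.e., ∫₀¹ K'(x)² dx = 2 ∫₀¹ K(x)² dx. -/
/-!
Landen's substitution `sin φ = (1 + t) sin θ / (1 + t sin² θ)` turns `K(2√t / (1 + t))` into
`(1 + t) K(t)`. Since `1 - ((1 - t) / (1 + t))² = (2√t / (1 + t))²`, this reads
`K'((1 - t) / (1 + t)) = (1 + t) K(t)`, and the substitution `x = (1 - t) / (1 + t)`,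
`dx = -2 dt / (1 + t)²`, turns `∫₀¹ K'(x)² dx` into `∫₀¹ 2 K(t)² dt`. The change of
variables formula for Bochner integrals needs no integrability, so the singularity of `K'`
at `0` costs nothing.
-/

open Real intervalIntegral

noncomputable def ellK (x : ℝ) : ℝ := ∫ θ in (0:ℝ)..(π/2), 1 / Real.sqrt (1 - x^2 * Real.sin θ ^ 2)

noncomputable def ellE (x : ℝ) : ℝ := ∫ θ in (0:ℝ)..(π/2), Real.sqrt (1 - x^2 * Real.sin θ ^ 2)

noncomputable def ellK' (x : ℝ) : ℝ := ellK (Real.sqrt (1 - x^2))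

noncomputable def ellE' (x : ℝ) : ℝ := ellE (Real.sqrt (1 - x^2))

open Set MeasureTheory

section ChangeOfVariables

variable {F : Type*} [NormedAddCommGroup F] [NormedSpace ℝ F] {a b c d : ℝ} {f f' : ℝ → ℝ}

theorem setIntegral_Ioo_eq_of_deriv_pos (hab : a ≤ b) (hf : ContinuousOn f (Icc a b))
    (hf' : ∀ x ∈ Ioo a b, HasDerivAt f (f' x) x) (hpos : ∀ x ∈ Ioo a b, 0 < f' x)
    (hfa : f a = c) (hfb : f b = d) (g : ℝ → F) :
    ∫ y in Ioo c d, g y = ∫ x in Ioo a b, f' x • g (f x) := by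
  subst hfa hfb
  have hmono : StrictMonoOn f (Icc a b) :=
    strictMonoOn_of_deriv_pos (convex_Icc a b) hf fun x hx => by
      rw [interior_Icc] at hx
      exact (hf' x hx).deriv ▸ hpos x hx
  rw [← hf.image_Ioo_of_strictMonoOn hab hmono, integral_image_eq_integral_abs_deriv_smul
    measurableSet_Ioo (fun x hx => (hf' x hx).hasDerivWithinAt)
    (hmono.injOn.mono Ioo_subset_Icc_self)]
  refine setIntegral_congr_fun measurableSet_Ioo fun x hx => ?_
  rw [abs_of_pos (hpos x hx)]

theorem setIntegral_Ioo_eq_of_deriv_neg (hab : a ≤ b) (hf : ContinuousOn f (Icc a b))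
    (hf' : ∀ x ∈ Ioo a b, HasDerivAt f (f' x) x) (hneg : ∀ x ∈ Ioo a b, f' x < 0)
    (hfa : f a = d) (hfb : f b = c) (g : ℝ → F) :
    ∫ y in Ioo c d, g y = ∫ x in Ioo a b, -f' x • g (f x) := by
  subst hfa hfb
  have hanti : StrictAntiOn f (Icc a b) :=
    strictAntiOn_of_deriv_neg (convex_Icc a b) hf fun x hx => by
      rw [interior_Icc] at hx
      exact (hf' x hx).deriv ▸ hneg x hx
  rw [← hf.image_Ioo_of_strictAntiOn hab hanti, integral_image_eq_integral_abs_deriv_smul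
    measurableSet_Ioo (fun x hx => (hf' x hx).hasDerivWithinAt)
    (hanti.injOn.mono Ioo_subset_Icc_self)]
  refine setIntegral_congr_fun measurableSet_Ioo fun x hx => ?_
  rw [abs_of_neg (hneg x hx)]

end ChangeOfVariables

theorem sin_mem_Ioo_of_mem_Ioo {θ : ℝ} (hθ : θ ∈ Ioo 0 (π / 2)) : sin θ ∈ Ioo 0 1 := by
  have hcos : 0 < cos θ := cos_pos_of_mem_Ioo ⟨by linarith [hθ.1, pi_pos], hθ.2⟩
  have hsin : 0 < sin θ := sin_pos_of_pos_of_lt_pi hθ.1 (by linarith [hθ.2, pi_pos])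
  exact ⟨hsin, by nlinarith [sin_sq_add_cos_sq θ]⟩

theorem ellK_eq_setIntegral_Ioo (k : ℝ) :
    ellK k = ∫ θ in Ioo 0 (π / 2), 1 / √(1 - k ^ 2 * sin θ ^ 2) := by
  rw [ellK, integral_of_le (by positivity), integral_Ioc_eq_integral_Ioo]

namespace Landen

variable {t θ : ℝ}

noncomputable def sinAngle (t θ : ℝ) : ℝ := (1 + t) * sin θ / (1 + t * sin θ ^ 2)

noncomputable def angle (t θ : ℝ) : ℝ := arcsin (sinAngle t θ)

noncomputable def angleDeriv (t θ : ℝ) : ℝ :=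
  (1 + t) * (1 - t * sin θ ^ 2) / ((1 + t * sin θ ^ 2) * √(1 - t ^ 2 * sin θ ^ 2))

theorem one_add_mul_sin_sq_pos (ht : 0 ≤ t) : 0 < 1 + t * sin θ ^ 2 := by positivity

theorem one_sub_mul_sin_sq_pos (ht1 : t ≤ 1) (hθ : θ ∈ Ioo 0 (π / 2)) :
    0 < 1 - t * sin θ ^ 2 := by
  obtain ⟨hs0, hs1⟩ := sin_mem_Ioo_of_mem_Ioo hθ
  nlinarith

theorem one_sub_sq_mul_sin_sq_pos (ht0 : 0 ≤ t) (ht1 : t ≤ 1) (hθ : θ ∈ Ioo 0 (π / 2)) :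
    0 < 1 - t ^ 2 * sin θ ^ 2 :=
  one_sub_mul_sin_sq_pos (by nlinarith) hθ

theorem sinAngle_mem_Ioo (ht0 : 0 ≤ t) (ht1 : t ≤ 1) (hθ : θ ∈ Ioo 0 (π / 2)) :
    sinAngle t θ ∈ Ioo 0 1 := by
  obtain ⟨hs0, hs1⟩ := sin_mem_Ioo_of_mem_Ioo hθ
  have hD := one_add_mul_sin_sq_pos (θ := θ) ht0
  refine ⟨by unfold sinAngle; positivity, (div_lt_one hD).2 ?_⟩
  -- `1 + t s² - (1 + t) s = (1 - s) (1 - t s)`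
  nlinarith [mul_pos (sub_pos.2 hs1) (sub_pos.2 (show t * sin θ < 1 by nlinarith))]

theorem one_sub_sinAngle_sq (ht : 0 ≤ t) :
    1 - sinAngle t θ ^ 2 =
      cos θ ^ 2 * (1 - t ^ 2 * sin θ ^ 2) / (1 + t * sin θ ^ 2) ^ 2 := by
  have hD := one_add_mul_sin_sq_pos (θ := θ) ht
  rw [sinAngle, cos_sq', eq_div_iff (by positivity)]
  field_simp
  ring

theorem one_sub_sq_mul_sinAngle_sq (ht : 0 ≤ t) :
    1 - (2 * √t / (1 + t)) ^ 2 * sinAngle t θ ^ 2 =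
      ((1 - t * sin θ ^ 2) / (1 + t * sin θ ^ 2)) ^ 2 := by
  have hD := one_add_mul_sin_sq_pos (θ := θ) ht
  rw [sinAngle, div_pow, mul_pow, sq_sqrt ht]
  field_simp
  ring

theorem hasDerivAt_sinAngle (ht : 0 ≤ t) :
    HasDerivAt (sinAngle t)
      ((1 + t) * cos θ * (1 - t * sin θ ^ 2) / (1 + t * sin θ ^ 2) ^ 2) θ := by
  have hnum : HasDerivAt (fun θ => (1 + t) * sin θ) ((1 + t) * cos θ) θ :=
    (hasDerivAt_sin θ).const_mul _
  have hden : HasDerivAt (fun θ => 1 + t * sin θ ^ 2) (t * (2 * sin θ * cos θ)) θ := by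
    simpa using (((hasDerivAt_sin θ).pow 2).const_mul t).const_add 1
  refine (hnum.div hden (one_add_mul_sin_sq_pos ht).ne').congr_deriv ?_
  ring

theorem sqrt_one_sub_sinAngle_sq (ht0 : 0 ≤ t) (hθ : θ ∈ Ioo 0 (π / 2)) :
    √(1 - sinAngle t θ ^ 2) = cos θ * √(1 - t ^ 2 * sin θ ^ 2) / (1 + t * sin θ ^ 2) := by
  have hcos : 0 < cos θ := cos_pos_of_mem_Ioo ⟨by linarith [hθ.1, pi_pos], hθ.2⟩
  have hD := one_add_mul_sin_sq_pos (θ := θ) ht0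
  rw [one_sub_sinAngle_sq ht0, sqrt_div' _ (sq_nonneg _), sqrt_mul (sq_nonneg _), sqrt_sq hcos.le,
    sqrt_sq hD.le]

theorem hasDerivAt_angle (ht0 : 0 ≤ t) (ht1 : t ≤ 1) (hθ : θ ∈ Ioo 0 (π / 2)) :
    HasDerivAt (angle t) (angleDeriv t θ) θ := by
  obtain ⟨hg0, hg1⟩ := sinAngle_mem_Ioo ht0 ht1 hθ
  have hcos : 0 < cos θ := cos_pos_of_mem_Ioo ⟨by linarith [hθ.1, pi_pos], hθ.2⟩
  have hD := one_add_mul_sin_sq_pos (θ := θ) ht0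
  have hQ : 0 < √(1 - t ^ 2 * sin θ ^ 2) := sqrt_pos.2 (one_sub_sq_mul_sin_sq_pos ht0 ht1 hθ)
  refine ((hasDerivAt_arcsin (by linarith) hg1.ne).comp θ
    (hasDerivAt_sinAngle ht0)).congr_deriv ?_
  rw [sqrt_one_sub_sinAngle_sq ht0 hθ, angleDeriv]
  field_simp

theorem angleDeriv_pos (ht0 : 0 ≤ t) (ht1 : t ≤ 1) (hθ : θ ∈ Ioo 0 (π / 2)) :
    0 < angleDeriv t θ := by
  have hN := one_sub_mul_sin_sq_pos ht1 hθ
  have hQ := one_sub_sq_mul_sin_sq_pos ht0 ht1 hθ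
  unfold angleDeriv
  positivity

theorem continuous_angle (ht : 0 ≤ t) : Continuous (angle t) :=
  continuous_arcsin.comp <| (continuous_const.mul continuous_sin).div
    (continuous_const.add (continuous_const.mul (continuous_sin.pow 2)))
    fun _ => (one_add_mul_sin_sq_pos ht).ne'

theorem angle_zero : angle t 0 = 0 := by simp [angle, sinAngle]

theorem angle_pi_div_two (ht : 0 ≤ t) : angle t (π / 2) = π / 2 := by
  have : (1 + t) ≠ 0 := by positivity
  simp [angle, sinAngle, this]

theorem angleDeriv_mul_integrand (ht0 : 0 ≤ t) (ht1 : t ≤ 1) (hθ : θ ∈ Ioo 0 (π / 2)) :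
    angleDeriv t θ * (1 / √(1 - (2 * √t / (1 + t)) ^ 2 * sin (angle t θ) ^ 2)) =
      (1 + t) * (1 / √(1 - t ^ 2 * sin θ ^ 2)) := by
  obtain ⟨hg0, hg1⟩ := sinAngle_mem_Ioo ht0 ht1 hθ
  have hD := one_add_mul_sin_sq_pos (θ := θ) ht0
  have hN := one_sub_mul_sin_sq_pos ht1 hθ
  have hQ : 0 < √(1 - t ^ 2 * sin θ ^ 2) := sqrt_pos.2 (one_sub_sq_mul_sin_sq_pos ht0 ht1 hθ)
  rw [angle, sin_arcsin (by linarith) hg1.le, one_sub_sq_mul_sinAngle_sq ht0,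
    sqrt_sq (div_pos hN hD).le, angleDeriv]
  field_simp

end Landen

open Landen in
theorem ellK_landen {t : ℝ} (ht0 : 0 ≤ t) (ht1 : t ≤ 1) :
    ellK (2 * √t / (1 + t)) = (1 + t) * ellK t := by
  rw [ellK_eq_setIntegral_Ioo, ellK_eq_setIntegral_Ioo, ← MeasureTheory.integral_const_mul,
    setIntegral_Ioo_eq_of_deriv_pos (by positivity) (continuous_angle ht0).continuousOn
    (fun θ hθ => hasDerivAt_angle ht0 ht1 hθ) (fun θ hθ => angleDeriv_pos ht0 ht1 hθ) angle_zero
    (angle_pi_div_two ht0)]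
  exact setIntegral_congr_fun measurableSet_Ioo fun θ hθ =>
    angleDeriv_mul_integrand ht0 ht1 hθ

theorem sqrt_one_sub_sq_one_sub_div_one_add {t : ℝ} (ht : 0 ≤ t) :
    √(1 - ((1 - t) / (1 + t)) ^ 2) = 2 * √t / (1 + t) := by
  have h : 1 - ((1 - t) / (1 + t)) ^ 2 = (2 * √t / (1 + t)) ^ 2 := by
    rw [div_pow, div_pow, mul_pow, sq_sqrt ht]
    field_simp
    ring
  rw [h, sqrt_sq (by positivity)]

theorem ellK'_one_sub_div_one_add {t : ℝ} (ht0 : 0 ≤ t) (ht1 : t ≤ 1) :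
    ellK' ((1 - t) / (1 + t)) = (1 + t) * ellK t := by
  rw [ellK', sqrt_one_sub_sq_one_sub_div_one_add ht0, ellK_landen ht0 ht1]

theorem hasDerivAt_one_sub_div_one_add {t : ℝ} (ht : 1 + t ≠ 0) :
    HasDerivAt (fun t => (1 - t) / (1 + t)) (-(2 / (1 + t) ^ 2)) t := by
  refine (((hasDerivAt_id t).const_sub 1).div ((hasDerivAt_id t).const_add 1) ht).congr_deriv ?_
  simp only [id]
  ring

theorem stmt_0 :
    (∫ x in (0:ℝ)..1, ellK' x ^ 2) = 2 * ∫ x in (0:ℝ)..1, ellK x ^ 2 := by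
  rw [integral_of_le zero_le_one, integral_of_le zero_le_one, integral_Ioc_eq_integral_Ioo,
    integral_Ioc_eq_integral_Ioo, ← MeasureTheory.integral_const_mul,
    setIntegral_Ioo_eq_of_deriv_neg (f := fun t => (1 - t) / (1 + t)) zero_le_one
    ((continuousOn_const.sub continuousOn_id).div (continuousOn_const.add continuousOn_id)
      fun t ht => by linarith [ht.1])
    (fun t ht => hasDerivAt_one_sub_div_one_add (by linarith [ht.1]))
    (fun t ht => neg_neg_of_pos (div_pos two_pos (pow_pos (by linarith [ht.1]) 2)))
    (by norm_num) (by norm_num)]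
  refine setIntegral_congr_fun measurableSet_Ioo fun t ht => ?_
  have h1t : 1 + t ≠ 0 := by linarith [ht.1]
  rw [smul_eq_mul, ellK'_one_sub_div_one_add ht.1.le ht.2.le]
  field_simp
end

section
/- For all x in [0,1], E(x) = ((1+x)/2)·E(2√x/(1+x)) + ((1-x²)/2)·K(x). -/
open Real intervalIntegral

/-!
Landen's substitution `sin φ = (1 + k) sin θ / (1 + k sin² θ)` maps `[0, π/2]` onto itself and,
with `k₁ = 2√k / (1 + k)`, turns `1 - k₁² sin² φ` into the square of
`(1 - k sin² θ) / (1 + k sin² θ)`. Differentiating in the upper limit then shows that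
`(1 + k) E(φ(θ), k₁) - 2 E(θ, k) + (1 - k²) F(θ, k)` equals the elementary term
`2k sin θ cos θ √(1 - k² sin² θ) / (1 + k sin² θ)`, which vanishes at `θ = π/2`, giving the identity
for the complete integrals. At `x = 1` both sides are `E(1)`.
-/

noncomputable def ellFInc (k φ : ℝ) : ℝ := ∫ θ in (0:ℝ)..φ, 1 / √(1 - k ^ 2 * sin θ ^ 2)

noncomputable def ellEInc (k φ : ℝ) : ℝ := ∫ θ in (0:ℝ)..φ, √(1 - k ^ 2 * sin θ ^ 2)

lemma one_sub_sq_mul_sin_sq_pos {k : ℝ} (hk : k ^ 2 < 1) (θ : ℝ) : 0 < 1 - k ^ 2 * sin θ ^ 2 := by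
  nlinarith [sin_sq_le_one θ, sq_nonneg (sin θ)]

lemma hasDerivAt_ellEInc (k φ : ℝ) : HasDerivAt (ellEInc k) √(1 - k ^ 2 * sin φ ^ 2) φ :=
  ((by fun_prop : Continuous fun θ => √(1 - k ^ 2 * sin θ ^ 2)).integral_hasStrictDerivAt
    0 φ).hasDerivAt

lemma hasDerivAt_ellFInc {k : ℝ} (hk : k ^ 2 < 1) (φ : ℝ) :
    HasDerivAt (ellFInc k) (1 / √(1 - k ^ 2 * sin φ ^ 2)) φ := by
  have hc : Continuous fun θ => 1 / √(1 - k ^ 2 * sin θ ^ 2) :=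
    continuous_const.div (by fun_prop) fun θ => (sqrt_pos.2 (one_sub_sq_mul_sin_sq_pos hk θ)).ne'
  exact (hc.integral_hasStrictDerivAt 0 φ).hasDerivAt

lemma hasDerivAt_sin_sq (θ : ℝ) : HasDerivAt (fun t => sin t ^ 2) (2 * sin θ * cos θ) θ :=
  ((hasDerivAt_sin θ).fun_pow 2).congr_deriv (by ring)

noncomputable def landenModulus (k : ℝ) : ℝ := 2 * √k / (1 + k)

noncomputable def landenAngle (k θ : ℝ) : ℝ := arcsin ((1 + k) * sin θ / (1 + k * sin θ ^ 2))

section Landen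

variable {k : ℝ}

lemma landenAngle_zero (k : ℝ) : landenAngle k 0 = 0 := by simp [landenAngle]

lemma landenAngle_pi_div_two (hk : 0 ≤ k) : landenAngle k (π / 2) = π / 2 := by
  simp [landenAngle, div_self (by positivity : (1 + k) ≠ 0)]

lemma continuous_landenAngle (hk : 0 ≤ k) : Continuous (landenAngle k) :=
  continuous_arcsin.comp <| Continuous.div (by fun_prop) (by fun_prop) fun θ => by positivity

lemma sqrt_one_sub_landenModulus_sq_mul (hk : 0 ≤ k) {s : ℝ} (hs : k * s ^ 2 ≤ 1) :
    √(1 - landenModulus k ^ 2 * ((1 + k) * s / (1 + k * s ^ 2)) ^ 2)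
      = (1 - k * s ^ 2) / (1 + k * s ^ 2) := by
  have h1 : 0 < 1 + k := by linarith
  have h2 : 0 < 1 + k * s ^ 2 := by positivity
  rw [← sqrt_sq (div_nonneg (sub_nonneg.2 hs) h2.le)]
  congr 1
  rw [landenModulus, div_pow, mul_pow, sq_sqrt hk]
  field_simp
  ring

lemma abs_landen_ratio_lt_one (hk0 : 0 ≤ k) (hk1 : k < 1) {s : ℝ} (hs : s ^ 2 < 1) :
    |(1 + k) * s / (1 + k * s ^ 2)| < 1 := by
  have hD : 0 < 1 + k * s ^ 2 := by positivity
  have hs1 : |s| < 1 := by rwa [← sq_lt_one_iff_abs_lt_one]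
  rw [abs_div, abs_of_pos hD, div_lt_one hD, abs_mul, abs_of_pos (by linarith : 0 < 1 + k),
    ← sq_abs s]
  have hks : 0 < 1 - k * |s| := by nlinarith [abs_nonneg s]
  nlinarith [abs_nonneg s, mul_pos (sub_pos.2 hs1) hks]

lemma sin_landenAngle (hk0 : 0 ≤ k) (hk1 : k < 1) {θ : ℝ} (hθ : sin θ ^ 2 < 1) :
    sin (landenAngle k θ) = (1 + k) * sin θ / (1 + k * sin θ ^ 2) := by
  have h := abs_lt.1 (abs_landen_ratio_lt_one hk0 hk1 hθ)
  exact sin_arcsin h.1.le h.2.le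

lemma hasDerivAt_landenAngle (hk0 : 0 ≤ k) (hk1 : k < 1) {θ : ℝ} (hθ : 0 < cos θ) :
    HasDerivAt (landenAngle k)
      ((1 + k) * (1 - k * sin θ ^ 2) / ((1 + k * sin θ ^ 2) * √(1 - k ^ 2 * sin θ ^ 2))) θ := by
  set s := sin θ
  set c := cos θ
  have hc2 : c ^ 2 = 1 - s ^ 2 := cos_sq' θ
  have hs : s ^ 2 < 1 := by nlinarith
  have hk2 : k ^ 2 < 1 := by nlinarith
  have hΔ2 : √(1 - k ^ 2 * s ^ 2) ^ 2 = 1 - k ^ 2 * s ^ 2 :=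
    sq_sqrt (one_sub_sq_mul_sin_sq_pos hk2 θ).le
  have hΔ : 0 < √(1 - k ^ 2 * s ^ 2) := sqrt_pos.2 (one_sub_sq_mul_sin_sq_pos hk2 θ)
  have hD : 0 < 1 + k * s ^ 2 := by positivity
  set y := (1 + k) * s / (1 + k * s ^ 2) with hy
  have hy1 := abs_lt.1 (abs_landen_ratio_lt_one hk0 hk1 hs)
  have hsqrt : √(1 - y ^ 2) = c * √(1 - k ^ 2 * s ^ 2) / (1 + k * s ^ 2) := by
    rw [← sqrt_sq (by positivity : 0 ≤ c * √(1 - k ^ 2 * s ^ 2) / (1 + k * s ^ 2))]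
    congr 1
    rw [div_pow (c * _), mul_pow, hc2, hΔ2, hy]
    field_simp
    ring
  have hinner : HasDerivAt (fun t => (1 + k) * sin t / (1 + k * sin t ^ 2))
      (((1 + k) * c * (1 + k * s ^ 2) - (1 + k) * s * (k * (2 * s * c))) /
        (1 + k * s ^ 2) ^ 2) θ := by
    have := ((hasDerivAt_sin θ).const_mul (1 + k)).fun_div
      ((hasDerivAt_sin_sq θ).const_mul k |>.const_add 1) hD.ne'
    exact this.congr_deriv (by ring)
  refine ((hasDerivAt_arcsin hy1.1.ne' hy1.2.ne).comp θ hinner).congr_deriv ?_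
  rw [hsqrt]
  field_simp
  ring

lemma hasDerivAt_ellEInc_landenModulus_landenAngle (hk0 : 0 ≤ k) (hk1 : k < 1) {θ : ℝ}
    (hθ : 0 < cos θ) :
    HasDerivAt (fun t => ellEInc (landenModulus k) (landenAngle k t))
      ((1 + k) * (1 - k * sin θ ^ 2) ^ 2 /
        ((1 + k * sin θ ^ 2) ^ 2 * √(1 - k ^ 2 * sin θ ^ 2))) θ := by
  have hs : sin θ ^ 2 < 1 := by nlinarith [sin_sq_add_cos_sq θ]
  have hks : k * sin θ ^ 2 ≤ 1 := by nlinarith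
  refine ((hasDerivAt_ellEInc _ _).comp θ (hasDerivAt_landenAngle hk0 hk1 hθ)).congr_deriv ?_
  rw [sin_landenAngle hk0 hk1 hs, sqrt_one_sub_landenModulus_sq_mul hk0 hks]
  field_simp

lemma hasDerivAt_landenRemainder (hk0 : 0 ≤ k) (hk1 : k < 1) (θ : ℝ) :
    HasDerivAt (fun t => 2 * k * sin t * cos t * √(1 - k ^ 2 * sin t ^ 2) / (1 + k * sin t ^ 2))
      ((1 - k ^ 2) / √(1 - k ^ 2 * sin θ ^ 2) - 2 * √(1 - k ^ 2 * sin θ ^ 2) +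
        (1 + k) ^ 2 * (1 - k * sin θ ^ 2) ^ 2 /
          ((1 + k * sin θ ^ 2) ^ 2 * √(1 - k ^ 2 * sin θ ^ 2))) θ := by
  have hpos := one_sub_sq_mul_sin_sq_pos (by nlinarith : k ^ 2 < 1) θ
  have hD : 0 < 1 + k * sin θ ^ 2 := by positivity
  have hsin2 := hasDerivAt_sin_sq θ
  have hΔ := ((hsin2.const_mul (k ^ 2)).const_sub 1).sqrt hpos.ne'
  have h := ((((hasDerivAt_sin θ).const_mul (2 * k)).fun_mul (hasDerivAt_cos θ)).fun_mul
    hΔ).fun_div ((hsin2.const_mul k).const_add 1) hD.ne'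
  refine h.congr_deriv ?_
  have := (sqrt_pos.2 hpos).ne'
  field_simp
  rw [sq_sqrt hpos.le, cos_sq']
  ring

theorem landen_ellEInc (hk0 : 0 ≤ k) (hk1 : k < 1) {φ : ℝ} (hφ0 : 0 ≤ φ) (hφ : φ ≤ π / 2) :
    (1 + k) * ellEInc (landenModulus k) (landenAngle k φ) =
      2 * ellEInc k φ - (1 - k ^ 2) * ellFInc k φ +
        2 * k * sin φ * cos φ * √(1 - k ^ 2 * sin φ ^ 2) / (1 + k * sin φ ^ 2) := by
  have hk2 : k ^ 2 < 1 := by nlinarith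
  set F : ℝ → ℝ := fun t => (1 + k) * ellEInc (landenModulus k) (landenAngle k t) -
    (2 * ellEInc k t - (1 - k ^ 2) * ellFInc k t +
      2 * k * sin t * cos t * √(1 - k ^ 2 * sin t ^ 2) / (1 + k * sin t ^ 2)) with hF
  have hE : ∀ k, Continuous (ellEInc k) := fun k =>
    continuous_iff_continuousAt.2 fun t => (hasDerivAt_ellEInc k t).continuousAt
  have hFc : Continuous F := by
    have hK : Continuous (ellFInc k) :=
      continuous_iff_continuousAt.2 fun t => (hasDerivAt_ellFInc hk2 t).continuousAt
    have hR : Continuous fun t => 2 * k * sin t * cos t * √(1 - k ^ 2 * sin t ^ 2) /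
        (1 + k * sin t ^ 2) :=
      Continuous.div (by fun_prop) (by fun_prop) fun t => by positivity
    exact (continuous_const.mul ((hE _).comp (continuous_landenAngle hk0))).sub
      (((continuous_const.mul (hE k)).sub (continuous_const.mul hK)).add hR)
  have hF' : ∀ t ∈ Set.Ico 0 φ, HasDerivAt F 0 t := by
    rintro t ⟨ht0, htφ⟩
    have hcos : 0 < cos t := cos_pos_of_mem_Ioo ⟨by linarith [pi_pos], by linarith⟩
    have hpos := one_sub_sq_mul_sin_sq_pos hk2 t
    have := (sqrt_pos.2 hpos).ne'
    have hD : 0 < 1 + k * sin t ^ 2 := by positivity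
    refine (((hasDerivAt_ellEInc_landenModulus_landenAngle hk0 hk1 hcos).const_mul (1 + k)).sub
      ((((hasDerivAt_ellEInc k t).const_mul 2).sub ((hasDerivAt_ellFInc hk2 t).const_mul _)).add
        (hasDerivAt_landenRemainder hk0 hk1 t))).congr_deriv ?_
    field_simp
    ring
  have hF0 : F 0 = 0 := by simp [hF, landenAngle_zero, ellEInc, ellFInc]
  have := constant_of_has_deriv_right_zero hFc.continuousOn
    (fun t ht => (hF' t ht).hasDerivWithinAt) φ ⟨hφ0, le_rfl⟩
  rw [hF0, hF] at this
  exact sub_eq_zero.1 this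

theorem landen_ellE (hk0 : 0 ≤ k) (hk1 : k < 1) :
    (1 + k) * ellE (landenModulus k) = 2 * ellE k - (1 - k ^ 2) * ellK k := by
  have h := landen_ellEInc hk0 hk1 (φ := π / 2) (by positivity) le_rfl
  simp only [landenAngle_pi_div_two hk0, cos_pi_div_two, mul_zero, zero_mul, zero_div,
    add_zero] at h
  exact h

end Landen

theorem stmt_2 : ∀ x : ℝ, x ∈ Set.Icc (0:ℝ) 1 →
    ellE x = ((1 + x) / 2) * ellE (2 * Real.sqrt x / (1 + x)) + ((1 - x^2) / 2) * ellK x := by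
  rintro x ⟨hx0, hx1⟩
  rcases hx1.lt_or_eq with hx1 | rfl
  · have := landen_ellE hx0 hx1
    rw [landenModulus] at this
    linarith
  · norm_num
end

section
/- For every integer n ≥ 0, ∫₀¹ xⁿ K'(x) dx = (π/4) · Γ((n+1)/2)² / Γ((n+2)/2)². -/
open Real intervalIntegral

/-!
Both sides equal `Wₙ²`, where `Wₙ = ∫₀^{π/2} sinⁿ θ dθ`. Integrate `xⁿ / √(sin² φ - x²)` over
`0 < x < sin φ`, `0 < φ < π/2` in both orders. For fixed `φ`, the substitution
`x = sin φ · sin ψ` gives `sinⁿ φ · Wₙ`, so the double integral is `Wₙ²`. For fixed `x`, the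
substitution `φ = arccos (√(1 - x²) · sin θ)` turns the inner integral into `K'(x)`. Finally
the reduction formula `Wₙ₊₂ = (n + 1) / (n + 2) · Wₙ` gives
`Wₙ = √π / 2 · Γ((n + 1) / 2) / Γ((n + 2) / 2)`.
-/

open MeasureTheory Set

theorem integral_sin_pow_zero_pi_div_two : ∀ n : ℕ,
    ∫ θ in (0:ℝ)..(π / 2), sin θ ^ n = √π / 2 * Gamma ((n + 1) / 2) / Gamma ((n + 2) / 2)
  | 0 => by norm_num [Gamma_one_half_eq, div_mul_eq_mul_div, mul_self_sqrt pi_pos.le]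
  | 1 => by
    have hΓ : Gamma (((1 : ℕ) + 2 : ℝ) / 2) = √π / 2 := by
      rw [show ((1 : ℕ) + 2 : ℝ) / 2 = 1 / 2 + 1 by norm_num, Gamma_add_one one_half_pos.ne',
        Gamma_one_half_eq]
      ring
    rw [hΓ]
    norm_num [(sqrt_pos.2 pi_pos).ne']
  | n + 2 => by
    have hΓ₁ : Gamma ((n + 1) / 2 + 1) = (n + 1) / 2 * Gamma ((n + 1) / 2) :=
      Gamma_add_one (by positivity)
    have hΓ₂ : Gamma ((n + 2) / 2 + 1) = (n + 2) / 2 * Gamma ((n + 2) / 2) :=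
      Gamma_add_one (by positivity)
    rw [integral_sin_pow, integral_sin_pow_zero_pi_div_two n]
    push_cast
    rw [show ((n:ℝ) + 2 + 1) / 2 = (n + 1) / 2 + 1 by ring,
      show ((n:ℝ) + 2 + 2) / 2 = (n + 2) / 2 + 1 by ring, hΓ₁, hΓ₂]
    simp only [sin_zero, cos_pi_div_two, zero_pow (Nat.succ_ne_zero n), zero_mul, mul_zero,
      sub_self, zero_div, zero_add]
    field_simp

lemma image_mul_sin_Ioo {c : ℝ} (hc : 0 < c) :
    (fun θ => c * sin θ) '' Ioo 0 (π / 2) = Ioo 0 c := by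
  ext x
  constructor
  · rintro ⟨θ, ⟨hθ₀, hθ₁⟩, rfl⟩
    have hsin₀ : 0 < sin θ := sin_pos_of_pos_of_lt_pi hθ₀ (by linarith)
    have hsin₁ : sin θ < 1 := by
      rw [← sin_pi_div_two]
      exact sin_lt_sin_of_lt_of_le_pi_div_two (by linarith) le_rfl hθ₁
    exact ⟨by positivity, mul_lt_of_lt_one_right hc hsin₁⟩
  · rintro ⟨hx₀, hx₁⟩
    have hxc : x / c < 1 := (div_lt_one hc).2 hx₁
    refine ⟨arcsin (x / c), ⟨arcsin_pos.2 (by positivity), arcsin_lt_pi_div_two.2 hxc⟩, ?_⟩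
    simp only
    rw [sin_arcsin (by linarith [div_pos hx₀ hc]) hxc.le, mul_div_cancel₀ _ hc.ne']

lemma injOn_mul_sin_Ioo {c : ℝ} (hc : 0 < c) : InjOn (fun θ => c * sin θ) (Ioo 0 (π / 2)) := by
  have hsub : Ioo 0 (π / 2) ⊆ Icc (-(π / 2)) (π / 2) :=
    Ioo_subset_Icc_self.trans (Icc_subset_Icc (by linarith [pi_pos]) le_rfl)
  exact fun _ ha _ hb h => injOn_sin (hsub ha) (hsub hb) (mul_left_cancel₀ hc.ne' h)

lemma mul_cos_pos {c θ : ℝ} (hc : 0 < c) (hθ : θ ∈ Ioo 0 (π / 2)) : 0 < c * cos θ :=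
  mul_pos hc (cos_pos_of_mem_Ioo ⟨by linarith [pi_pos, hθ.1], hθ.2⟩)

theorem integral_Ioo_eq_integral_mul_sin {c : ℝ} (hc : 0 < c) (g : ℝ → ℝ) :
    ∫ x in Ioo 0 c, g x = ∫ θ in Ioo 0 (π / 2), c * cos θ * g (c * sin θ) := by
  rw [← image_mul_sin_Ioo hc, integral_image_eq_integral_abs_deriv_smul measurableSet_Ioo
    (fun θ _ => ((hasDerivAt_sin θ).const_mul c).hasDerivWithinAt) (injOn_mul_sin_Ioo hc)]
  exact setIntegral_congr_fun measurableSet_Ioo fun θ hθ => by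
    rw [abs_of_pos (mul_cos_pos hc hθ), smul_eq_mul]

theorem integrableOn_Ioo_iff_mul_sin {c : ℝ} (hc : 0 < c) (g : ℝ → ℝ) :
    IntegrableOn g (Ioo 0 c) ↔
      IntegrableOn (fun θ => c * cos θ * g (c * sin θ)) (Ioo 0 (π / 2)) := by
  rw [← image_mul_sin_Ioo hc, integrableOn_image_iff_integrableOn_abs_deriv_smul measurableSet_Ioo
    (fun θ _ => ((hasDerivAt_sin θ).const_mul c).hasDerivWithinAt) (injOn_mul_sin_Ioo hc)]
  exact integrableOn_congr_fun (fun θ hθ => by rw [abs_of_pos (mul_cos_pos hc hθ), smul_eq_mul])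
    measurableSet_Ioo

lemma mul_cos_mul_pow_div_sqrt {c θ : ℝ} (hc : 0 < c) (hθ : θ ∈ Ioo 0 (π / 2)) (n : ℕ) :
    c * cos θ * ((c * sin θ) ^ n / √(c ^ 2 - (c * sin θ) ^ 2)) = c ^ n * sin θ ^ n := by
  have hcos := mul_cos_pos hc hθ
  have hsq : c ^ 2 - (c * sin θ) ^ 2 = (c * cos θ) ^ 2 := by rw [mul_pow, mul_pow, cos_sq']; ring
  rw [hsq, sqrt_sq hcos.le, mul_div_cancel₀ _ hcos.ne', mul_pow]

theorem integral_pow_div_sqrt_sq_sub_sq {c : ℝ} (hc : 0 < c) (n : ℕ) :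
    ∫ x in Ioo 0 c, x ^ n / √(c ^ 2 - x ^ 2) = c ^ n * ∫ θ in (0:ℝ)..(π / 2), sin θ ^ n := by
  rw [integral_Ioo_eq_integral_mul_sin hc, setIntegral_congr_fun measurableSet_Ioo
    fun θ hθ => mul_cos_mul_pow_div_sqrt hc hθ n, MeasureTheory.integral_const_mul,
    integral_of_le (by positivity), integral_Ioc_eq_integral_Ioo]

theorem integrableOn_pow_div_sqrt_sq_sub_sq {c : ℝ} (hc : 0 < c) (n : ℕ) :
    IntegrableOn (fun x => x ^ n / √(c ^ 2 - x ^ 2)) (Ioo 0 c) := by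
  rw [integrableOn_Ioo_iff_mul_sin hc, integrableOn_congr_fun
    (fun θ hθ => mul_cos_mul_pow_div_sqrt hc hθ n) measurableSet_Ioo]
  exact (by fun_prop : Continuous fun θ => c ^ n * sin θ ^ n).integrableOn_Icc.mono_set
    Ioo_subset_Icc_self

section ArccosSubstitution

variable {r : ℝ}

lemma image_arccos_Ioo (hr₁ : r ≤ 1) : arccos '' Ioo 0 r = Ioo (arccos r) (π / 2) := by
  ext φ
  constructor
  · rintro ⟨y, ⟨hy₀, hyr⟩, rfl⟩
    exact ⟨strictAntiOn_arccos ⟨by linarith, by linarith⟩ ⟨by linarith, hr₁⟩ hyr,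
      arccos_lt_pi_div_two.2 hy₀⟩
  · rintro ⟨hφr, hφ⟩
    have hφ₀ : 0 < φ := (arccos_nonneg r).trans_lt hφr
    have hr₀ : 0 < r := arccos_lt_pi_div_two.1 (hφr.trans hφ)
    refine ⟨cos φ, ⟨cos_pos_of_mem_Ioo ⟨by linarith, hφ⟩, ?_⟩, arccos_cos hφ₀.le (by linarith)⟩
    calc cos φ < cos (arccos r) := cos_lt_cos_of_nonneg_of_le_pi (arccos_nonneg r) (by linarith) hφr
      _ = r := cos_arccos (by linarith) hr₁

lemma image_arccos_mul_sin_Ioo (hr₀ : 0 < r) (hr₁ : r ≤ 1) :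
    (fun θ => arccos (r * sin θ)) '' Ioo 0 (π / 2) = Ioo (arccos r) (π / 2) := by
  rw [← image_arccos_Ioo hr₁, ← image_mul_sin_Ioo hr₀, image_image]

lemma mul_sin_mem_Ioo (hr₀ : 0 < r) (hr₁ : r ≤ 1) {θ : ℝ} (hθ : θ ∈ Ioo 0 (π / 2)) :
    r * sin θ ∈ Ioo 0 1 := by
  have hy : r * sin θ ∈ Ioo 0 r := image_mul_sin_Ioo hr₀ ▸ mem_image_of_mem _ hθ
  exact ⟨hy.1, hy.2.trans_le hr₁⟩

lemma injOn_arccos_mul_sin_Ioo (hr₀ : 0 < r) (hr₁ : r ≤ 1) :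
    InjOn (fun θ => arccos (r * sin θ)) (Ioo 0 (π / 2)) := by
  refine arccos_injOn.comp (injOn_mul_sin_Ioo hr₀) fun θ hθ => ?_
  have hy := mul_sin_mem_Ioo hr₀ hr₁ hθ
  exact ⟨by linarith [hy.1], hy.2.le⟩

lemma hasDerivAt_arccos_mul_sin (hr₀ : 0 < r) (hr₁ : r ≤ 1) {θ : ℝ} (hθ : θ ∈ Ioo 0 (π / 2)) :
    HasDerivAt (fun θ => arccos (r * sin θ)) (-(1 / √(1 - (r * sin θ) ^ 2)) * (r * cos θ)) θ := by
  have hy := mul_sin_mem_Ioo hr₀ hr₁ hθ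
  have hy' : r * sin θ ≠ -1 := by linarith [hy.1]
  exact HasDerivAt.comp (h₂ := arccos) θ (hasDerivAt_arccos hy' hy.2.ne)
    ((hasDerivAt_sin θ).const_mul r)

lemma abs_deriv_arccos_mul_sin_smul (hr₀ : 0 < r) (hr₁ : r ≤ 1) {θ : ℝ}
    (hθ : θ ∈ Ioo 0 (π / 2)) :
    |-(1 / √(1 - (r * sin θ) ^ 2)) * (r * cos θ)| •
        (1 / √(sin (arccos (r * sin θ)) ^ 2 - (1 - r ^ 2))) = 1 / √(1 - r ^ 2 * sin θ ^ 2) := by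
  have hy := mul_sin_mem_Ioo hr₀ hr₁ hθ
  have hcos := mul_cos_pos hr₀ hθ
  have hcos' : cos θ ≠ 0 := (pos_of_mul_pos_right hcos hr₀.le).ne'
  have hsin_sq : sin (arccos (r * sin θ)) ^ 2 - (1 - r ^ 2) = (r * cos θ) ^ 2 := by
    rw [sin_arccos, sq_sqrt (by nlinarith [hy.1, hy.2]), mul_pow, mul_pow, cos_sq']
    ring
  have hden : 0 < √(1 - r ^ 2 * sin θ ^ 2) := sqrt_pos.2 (by nlinarith [hy.1, hy.2])
  rw [hsin_sq, sqrt_sq hcos.le, smul_eq_mul, abs_mul, abs_neg, abs_of_pos hcos, mul_pow,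
    abs_of_pos (by positivity)]
  field_simp

theorem integral_one_div_sqrt_sin_sq_sub_eq_ellK (hr₀ : 0 < r) (hr₁ : r ≤ 1) :
    ∫ φ in Ioo 0 (π / 2), 1 / √(sin φ ^ 2 - (1 - r ^ 2)) = ellK r := by
  have hsub : Ioo (arccos r) (π / 2) ⊆ Ioo 0 (π / 2) :=
    Ioo_subset_Ioo_left (arccos_nonneg r)
  rw [setIntegral_eq_of_subset_of_forall_sdiff_eq_zero measurableSet_Ioo hsub ?_,
    ← image_arccos_mul_sin_Ioo hr₀ hr₁, integral_image_eq_integral_abs_deriv_smul measurableSet_Ioo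
      (fun θ hθ => (hasDerivAt_arccos_mul_sin hr₀ hr₁ hθ).hasDerivWithinAt)
      (injOn_arccos_mul_sin_Ioo hr₀ hr₁),
    setIntegral_congr_fun measurableSet_Ioo fun θ hθ => abs_deriv_arccos_mul_sin_smul hr₀ hr₁ hθ,
    ellK, integral_of_le (by positivity), integral_Ioc_eq_integral_Ioo]
  rintro φ ⟨⟨hφ₀, hφ⟩, hφ_notMem⟩
  have hφr : φ ≤ arccos r := not_lt.1 fun h => hφ_notMem ⟨h, hφ⟩
  have hcos : r ≤ cos φ := by
    calc r = cos (arccos r) := (cos_arccos (by linarith) hr₁).symm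
      _ ≤ cos φ := cos_le_cos_of_nonneg_of_le_pi hφ₀.le (arccos_le_pi r) hφr
  have hle : sin φ ^ 2 - (1 - r ^ 2) ≤ 0 := by nlinarith [sin_sq_add_cos_sq φ]
  rw [sqrt_eq_zero'.2 hle, div_zero]

end ArccosSubstitution

theorem ellK'_eq_integral_one_div_sqrt_sin_sq_sub_sq {x : ℝ} (hx : |x| < 1) :
    ellK' x = ∫ φ in Ioo 0 (π / 2), 1 / √(sin φ ^ 2 - x ^ 2) := by
  have hx₂ : x ^ 2 < 1 := (sq_lt_one_iff_abs_lt_one x).2 hx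
  rw [ellK', ← integral_one_div_sqrt_sin_sq_sub_eq_ellK (sqrt_pos.2 (by linarith))
    (sqrt_le_one.2 (by nlinarith)), sq_sqrt (by linarith), sub_sub_cancel]

lemma pow_div_sqrt_sq_sub_sq_of_le {c x : ℝ} (hc : 0 ≤ c) (hcx : c ≤ x) (n : ℕ) :
    x ^ n / √(c ^ 2 - x ^ 2) = 0 := by
  rw [sqrt_eq_zero'.2 (by nlinarith), div_zero]

lemma sin_mem_Ioc {φ : ℝ} (hφ : φ ∈ Ioo 0 (π / 2)) : sin φ ∈ Ioc 0 1 :=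
  ⟨sin_pos_of_pos_of_lt_pi hφ.1 (by linarith [hφ.2, pi_pos]), sin_le_one φ⟩

lemma integrableOn_pow_div_sqrt_sin_sq_sub_sq {φ : ℝ} (hφ : φ ∈ Ioo 0 (π / 2)) (n : ℕ) :
    IntegrableOn (fun x => x ^ n / √(sin φ ^ 2 - x ^ 2)) (Ioo 0 1) :=
  (integrableOn_pow_div_sqrt_sq_sub_sq (sin_mem_Ioc hφ).1 n).of_forall_sdiff_eq_zero
    measurableSet_Ioo fun _ hx => pow_div_sqrt_sq_sub_sq_of_le (sin_mem_Ioc hφ).1.le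
      (not_lt.1 fun h => hx.2 ⟨hx.1.1, h⟩) n

lemma integral_pow_div_sqrt_sin_sq_sub_sq {φ : ℝ} (hφ : φ ∈ Ioo 0 (π / 2)) (n : ℕ) :
    ∫ x in Ioo 0 1, x ^ n / √(sin φ ^ 2 - x ^ 2) =
      sin φ ^ n * ∫ θ in (0:ℝ)..(π / 2), sin θ ^ n := by
  rw [← integral_pow_div_sqrt_sq_sub_sq (sin_mem_Ioc hφ).1 n]
  exact setIntegral_eq_of_subset_of_forall_sdiff_eq_zero measurableSet_Ioo
    (Ioo_subset_Ioo_right (sin_mem_Ioc hφ).2) fun _ hx => pow_div_sqrt_sq_sub_sq_of_le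
      (sin_mem_Ioc hφ).1.le (not_lt.1 fun h => hx.2 ⟨hx.1.1, h⟩) n

theorem integral_pow_mul_ellK' (n : ℕ) :
    ∫ x in (0:ℝ)..1, x ^ n * ellK' x = (∫ θ in (0:ℝ)..(π / 2), sin θ ^ n) ^ 2 := by
  set W := ∫ θ in (0:ℝ)..(π / 2), sin θ ^ n with hW
  -- `√` of a negative number is `0`, so `F` vanishes where `sin φ ≤ x`.
  set F : ℝ → ℝ → ℝ := fun x φ => x ^ n / √(sin φ ^ 2 - x ^ 2)
  have hF_int : Integrable (Function.uncurry F)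
      ((volume.restrict (Ioo 0 1)).prod (volume.restrict (Ioo 0 (π / 2)))) := by
    refine (integrable_prod_iff' (Measurable.aestronglyMeasurable (by fun_prop))).2 ⟨?_, ?_⟩
    · filter_upwards [ae_restrict_mem measurableSet_Ioo] with φ hφ
        using integrableOn_pow_div_sqrt_sin_sq_sub_sq hφ n
    · refine IntegrableOn.congr_fun ((by fun_prop : Continuous fun φ => sin φ ^ n * W)
        |>.integrableOn_Icc.mono_set Ioo_subset_Icc_self) (fun φ hφ => ?_) measurableSet_Ioo
      rw [← integral_pow_div_sqrt_sin_sq_sub_sq hφ n]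
      exact setIntegral_congr_fun measurableSet_Ioo fun x hx =>
        (norm_of_nonneg (div_nonneg (pow_nonneg hx.1.le n) (sqrt_nonneg _))).symm
  have hx_section : ∀ x ∈ Ioo (0:ℝ) 1, ∫ φ in Ioo 0 (π / 2), F x φ = x ^ n * ellK' x := by
    intro x hx
    rw [ellK'_eq_integral_one_div_sqrt_sin_sq_sub_sq (abs_lt.2 ⟨by linarith [hx.1], hx.2⟩),
      ← MeasureTheory.integral_const_mul]
    simp only [F, mul_one_div]
  calc ∫ x in (0:ℝ)..1, x ^ n * ellK' x
      = ∫ x in Ioo 0 1, ∫ φ in Ioo 0 (π / 2), F x φ := by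
        rw [integral_of_le zero_le_one, integral_Ioc_eq_integral_Ioo]
        exact setIntegral_congr_fun measurableSet_Ioo fun x hx => (hx_section x hx).symm
    _ = ∫ φ in Ioo 0 (π / 2), ∫ x in Ioo 0 1, F x φ := integral_integral_swap hF_int
    _ = ∫ φ in Ioo 0 (π / 2), sin φ ^ n * W :=
        setIntegral_congr_fun measurableSet_Ioo fun φ hφ => integral_pow_div_sqrt_sin_sq_sub_sq hφ n
    _ = W ^ 2 := by
        rw [MeasureTheory.integral_mul_const, sq, hW, integral_of_le (by positivity),
          integral_Ioc_eq_integral_Ioo]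

theorem stmt_3 : ∀ n : ℕ,
    (∫ x in (0:ℝ)..1, x ^ n * ellK' x)
      = (π / 4) * Real.Gamma ((n + 1) / 2) ^ 2 / Real.Gamma ((n + 2) / 2) ^ 2 := by
  intro n
  rw [integral_pow_mul_ellK', integral_sin_pow_zero_pi_div_two, div_pow, mul_pow, div_pow,
    sq_sqrt pi_pos.le]
  ring
end

section
/- For nonnegative integers n, define h(n) = Σ_{k=0}^{n} C(2n−2k, n−k)² · C(2k, k)². Then Σ_{n=0}^∞ h(n) tⁿ = (4/π²) K(4√t)² for all t with 0 ≤ 16t < 1. -/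
open Real intervalIntegral

noncomputable def h (n : ℕ) : ℝ :=
  ∑ k ∈ Finset.range (n + 1),
    ((Nat.choose (2 * (n - k)) (n - k) : ℝ))^2 * ((Nat.choose (2 * k) k : ℝ))^2

/-!
Expanding `1 / √(1 - x² sin² θ)` by the binomial series, whose coefficients are
`C(2n, n) / 4ⁿ`, and integrating termwise with Wallis' integral
`∫₀^{π/2} sin^{2n} θ dθ = (π/2) C(2n, n) / 4ⁿ` gives `K(x) = (π/2) Σ (C(2n, n) / 4ⁿ)² x^{2n}`.
The Cauchy square of this series is `(π²/4) Σ h(n) (x²/16)ⁿ`, and `x = 4√t` turns `x²/16` into `t`.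
-/

open Finset MeasureTheory

lemma prod_range_div_eq_centralBinom_div_four_pow (n : ℕ) :
    ∏ i ∈ range n, (2 * (i : ℝ) + 1) / (2 * i + 2) = n.centralBinom / 4 ^ n := by
  induction n with
  | zero => simp
  | succ n ih =>
    have hrec : ((n : ℝ) + 1) * (n + 1).centralBinom = 2 * (2 * n + 1) * n.centralBinom := by
      exact_mod_cast Nat.succ_mul_centralBinom_succ n
    rw [prod_range_succ, ih]
    field_simp
    linear_combination (-2 * 4 ^ n) * hrec

lemma ascPochhammer_eval_half (n : ℕ) :
    (ascPochhammer ℝ n).eval (1 / 2) =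
      n.factorial * ∏ i ∈ range n, (2 * (i : ℝ) + 1) / (2 * i + 2) := by
  induction n with
  | zero => simp
  | succ n ih =>
    rw [ascPochhammer_succ_eval, ih, prod_range_succ, Nat.factorial_succ]
    push_cast
    field_simp
    ring

lemma multichoose_half_eq_centralBinom_div_four_pow (n : ℕ) :
    Ring.multichoose (1 / 2 : ℝ) n = n.centralBinom / 4 ^ n := by
  have hfac := Ring.factorial_nsmul_multichoose_eq_ascPochhammer (1 / 2 : ℝ) n
  rw [Polynomial.ascPochhammer_smeval_eq_eval, ascPochhammer_eval_half, nsmul_eq_mul,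
    prod_range_div_eq_centralBinom_div_four_pow] at hfac
  exact mul_left_cancel₀ (by positivity) hfac

lemma hasSum_centralBinom_div_four_pow_mul_pow {x : ℝ} (hx : |x| < 1) :
    HasSum (fun n ↦ (n.centralBinom / 4 ^ n : ℝ) * x ^ n) (1 / √(1 - x)) := by
  have hbin := (one_div_one_sub_rpow_hasFPowerSeriesOnBall_zero (1 / 2)).hasSum (y := x)
    (by simpa [enorm_eq_nnnorm, ← NNReal.coe_lt_coe] using hx)
  simp only [FormalMultilinearSeries.ofScalars_apply_eq, zero_add, smul_eq_mul] at hbin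
  simpa only [← Ring.multichoose_eq, multichoose_half_eq_centralBinom_div_four_pow,
    ← Real.sqrt_eq_rpow] using hbin

lemma integral_sin_pow_even_zero_pi_div_two (n : ℕ) :
    ∫ θ in (0 : ℝ)..π / 2, sin θ ^ (2 * n) = π / 2 * (n.centralBinom / 4 ^ n) := by
  have hsin := integral_comp_sub_left (fun θ ↦ cos θ ^ (2 * n)) (π / 2) (a := 0) (b := π / 2)
  simp only [cos_pi_div_two_sub, sub_self, sub_zero] at hsin
  rw [hsin, EulerSine.integral_cos_pow_eq, integral_sin_pow_even,
    prod_range_div_eq_centralBinom_div_four_pow]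
  ring

lemma hasSum_ellK {x : ℝ} (hx : |x| < 1) :
    HasSum (fun n ↦ π / 2 * (n.centralBinom / 4 ^ n : ℝ) ^ 2 * (x ^ 2) ^ n) (ellK x) := by
  have hx2 : |x ^ 2| < 1 := by rw [abs_pow]; exact pow_lt_one₀ (abs_nonneg x) hx two_ne_zero
  have hu (θ : ℝ) : |x ^ 2 * sin θ ^ 2| < 1 := by
    rw [abs_of_nonneg (by positivity)]
    nlinarith [sin_sq_le_one θ, sq_nonneg x, (sq_lt_one_iff_abs_lt_one x).2 hx]
  have hterm (n : ℕ) : ∫ θ in (0 : ℝ)..π / 2, (n.centralBinom / 4 ^ n : ℝ) * (x ^ 2 * sin θ ^ 2) ^ n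
      = π / 2 * (n.centralBinom / 4 ^ n : ℝ) ^ 2 * (x ^ 2) ^ n := by
    simp_rw [mul_pow, ← pow_mul, ← mul_assoc]
    rw [intervalIntegral.integral_const_mul, integral_sin_pow_even_zero_pi_div_two]
    ring
  simp_rw [← hterm]
  refine intervalIntegral.hasSum_integral_of_dominated_convergence
    (fun n _ ↦ (n.centralBinom / 4 ^ n : ℝ) * (x ^ 2) ^ n)
    (fun n ↦ (by fun_prop : Continuous _).aestronglyMeasurable) (fun n ↦ ae_of_all _ fun θ _ ↦ ?_)
    (ae_of_all _ fun _ _ ↦ (hasSum_centralBinom_div_four_pow_mul_pow hx2).summable)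
    intervalIntegrable_const (ae_of_all _ fun θ _ ↦ hasSum_centralBinom_div_four_pow_mul_pow (hu θ))
  rw [norm_mul, norm_pow, Real.norm_of_nonneg (by positivity), Real.norm_of_nonneg (by positivity)]
  gcongr
  nlinarith [sin_sq_le_one θ, sq_nonneg x]

lemma hasSum_ellK_sq {x : ℝ} (hx : |x| < 1) :
    HasSum (fun n ↦ π ^ 2 / 4 * h n * (x ^ 2 / 16) ^ n) (ellK x ^ 2) := by
  have hK := hasSum_ellK hx
  have hnorm := summable_norm_iff.mpr hK.summable
  have hprod := hasSum_sum_range_mul_of_summable_norm hnorm hnorm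
  rw [hK.tsum_eq, ← sq] at hprod
  refine hprod.congr_fun fun n ↦ ?_
  rw [h, mul_sum, sum_mul]
  refine sum_congr rfl fun k hk ↦ ?_
  obtain ⟨m, rfl⟩ := Nat.exists_eq_add_of_le (Nat.lt_succ_iff.mp (mem_range.mp hk))
  simp only [Nat.add_sub_cancel_left, ← Nat.centralBinom_eq_two_mul_choose]
  have h16 (j : ℕ) : (16 : ℝ) ^ j = (4 ^ j) ^ 2 := by rw [← pow_mul, mul_comm, pow_mul]; norm_num
  rw [pow_add, div_pow, div_pow, h16, h16]
  field_simp
  ring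

theorem stmt_7 : ∀ t : ℝ, 0 ≤ t → 16 * t < 1 →
    (∑' n : ℕ, h n * t ^ n) = (4 / π ^ 2) * ellK (4 * Real.sqrt t) ^ 2 := by
  intro t ht0 ht1
  have hx : |4 * √t| < 1 := by
    rw [abs_of_nonneg (by positivity)]
    nlinarith [sq_sqrt ht0, sqrt_nonneg t]
  have hK := (hasSum_ellK_sq hx).tsum_eq
  rw [mul_pow, sq_sqrt ht0, show (4 : ℝ) ^ 2 * t / 16 = t by ring] at hK
  simp only [mul_assoc, tsum_mul_left] at hK
  rw [← hK]
  field_simp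
end

section
/- For all t with 0 ≤ t < 1, ∫₀¹ (1/(1 − t²x²)) K'(x) dx = (π/2) K(t). -/
/-!
Write `K'(x) = ∫₀^{π/2} dθ / √(cos²θ + x² sin²θ)` and swap the two integrations. For fixed `θ`
the substitutions `u = x / √(cos²θ + x² sin²θ)` and then `u = sin φ` turn the `x`-integral into
`∫₀^{π/2} cos φ dφ / (1 - (sin²θ + t² cos²θ) sin²φ)`. Swapping once more, the `θ`-integral is the
classical `∫₀^{π/2} dθ / (a² cos²θ + b² sin²θ) = π / (2ab)` with `a = √(1 - t² sin²φ)` and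
`b = cos φ`, which leaves `(π/2) ∫₀^{π/2} dφ / √(1 - t² sin²φ) = (π/2) K(t)`.
All integrands are nonnegative, so the computation is carried out with lower Lebesgue integrals,
where Tonelli's theorem swaps the order without any integrability estimate.
-/

open Real intervalIntegral

open MeasureTheory Set

lemma one_sub_mul_sq_pos {m u : ℝ} (hm0 : 0 ≤ m) (hm : m < 1) (hu : u ^ 2 ≤ 1) :
    0 < 1 - m * u ^ 2 := by
  nlinarith [mul_le_mul_of_nonneg_left hu hm0]

lemma continuousOn_one_div_one_sub_mul_sq {m : ℝ} (hm0 : 0 ≤ m) (hm : m < 1) :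
    ContinuousOn (fun u => 1 / (1 - m * u ^ 2)) (Icc (-1) 1) :=
  continuousOn_const.div (Continuous.continuousOn (by fun_prop)) fun u hu =>
    (one_sub_mul_sq_pos hm0 hm (sq_le_one_iff_abs_le_one u |>.2 (abs_le.2 hu))).ne'

lemma ofReal_intervalIntegral_eq_setLIntegral_Ioo {f : ℝ → ℝ} {a b : ℝ} (hab : a ≤ b)
    (hf : IntervalIntegrable f volume a b) (hf0 : ∀ x ∈ Ioo a b, 0 ≤ f x) :
    ENNReal.ofReal (∫ x in a..b, f x) = ∫⁻ x in Ioo a b, ENNReal.ofReal (f x) := by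
  rw [integral_of_le hab, integral_Ioc_eq_integral_Ioo]
  exact ofReal_integral_eq_lintegral_ofReal (hf.1.mono_set Ioo_subset_Ioc_self)
    ((ae_restrict_iff' measurableSet_Ioo).2 (Filter.Eventually.of_forall hf0))

lemma image_tan_Ioo_zero_pi_div_two : tan '' Ioo 0 (π / 2) = Ioi 0 := by
  ext y
  constructor
  · rintro ⟨θ, hθ, rfl⟩
    exact tan_pos_of_pos_of_lt_pi_div_two hθ.1 hθ.2
  · intro hy
    refine ⟨arctan y, ⟨?_, arctan_lt_pi_div_two y⟩, tan_arctan y⟩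
    simpa [arctan_zero] using arctan_strictMono hy

theorem integral_one_div_sq_mul_cos_sq_add_sq_mul_sin_sq {a b : ℝ} (ha : 0 < a) (hb : 0 < b) :
    ∫ θ in (0:ℝ)..π / 2, 1 / (a ^ 2 * cos θ ^ 2 + b ^ 2 * sin θ ^ 2) = π / (2 * a * b) := by
  have hcos : ∀ θ ∈ Ioo 0 (π / 2), 0 < cos θ := fun θ hθ =>
    cos_pos_of_mem_Ioo ⟨by linarith [hθ.1, pi_pos], hθ.2⟩
  have hderiv : ∀ θ ∈ Ioo 0 (π / 2),
      HasDerivWithinAt (fun θ => b / a * tan θ) (b / a / cos θ ^ 2) (Ioo 0 (π / 2)) θ :=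
    fun θ hθ => by
      simpa [div_eq_mul_inv] using
        ((hasDerivAt_tan (hcos θ hθ).ne').const_mul (b / a)).hasDerivWithinAt
  have hinj : InjOn (fun θ => b / a * tan θ) (Ioo 0 (π / 2)) :=
    fun x hx y hy h => injOn_tan ⟨by linarith [hx.1, pi_pos], hx.2⟩
      ⟨by linarith [hy.1, pi_pos], hy.2⟩ (mul_left_cancel₀ (by positivity) h)
  have himage : (fun θ => b / a * tan θ) '' Ioo 0 (π / 2) = Ioi 0 := by
    rw [← image_image (b / a * ·), image_tan_Ioo_zero_pi_div_two,
      image_mul_left_Ioi (by positivity), mul_zero]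
  have hsubst := integral_image_eq_integral_abs_deriv_smul measurableSet_Ioo hderiv hinj
    (fun w => (a * b)⁻¹ * (1 + w ^ 2)⁻¹)
  rw [himage, MeasureTheory.integral_const_mul, integral_Ioi_inv_one_add_sq, arctan_zero] at hsubst
  rw [integral_of_le (by positivity), integral_Ioc_eq_integral_Ioo]
  calc ∫ θ in Ioo 0 (π / 2), 1 / (a ^ 2 * cos θ ^ 2 + b ^ 2 * sin θ ^ 2)
      = ∫ θ in Ioo 0 (π / 2), |b / a / cos θ ^ 2| • ((a * b)⁻¹ * (1 + (b / a * tan θ) ^ 2)⁻¹) := by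
        refine setIntegral_congr_fun measurableSet_Ioo fun θ hθ => ?_
        have hc := hcos θ hθ
        rw [smul_eq_mul, abs_of_pos (by positivity), tan_eq_sin_div_cos]
        field_simp
    _ = π / (2 * a * b) := by
        rw [← hsubst]
        field_simp
        ring

theorem integral_comp_sin_mul_cos {g : ℝ → ℝ} (hg : ContinuousOn g (Icc (-1) 1)) :
    ∫ φ in (0:ℝ)..π / 2, g (sin φ) * cos φ = ∫ u in (0:ℝ)..1, g u := by
  have hmaps : sin '' uIcc 0 (π / 2) ⊆ Icc (-1) 1 := by
    rintro _ ⟨φ, -, rfl⟩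
    exact ⟨neg_one_le_sin φ, sin_le_one φ⟩
  simpa using integral_comp_mul_deriv' (fun φ _ => hasDerivAt_sin φ) continuous_cos.continuousOn
    (hg.mono hmaps)

theorem integral_one_div_mul_sqrt_eq_integral_one_div_one_sub_mul_sq {c s t : ℝ} (hc : 0 < c)
    (hcs : c ^ 2 + s ^ 2 = 1) (ht : t ^ 2 < 1) :
    ∫ x in (0:ℝ)..1, 1 / ((1 - t ^ 2 * x ^ 2) * √(c ^ 2 + s ^ 2 * x ^ 2))
      = ∫ u in (0:ℝ)..1, 1 / (1 - (s ^ 2 + t ^ 2 * c ^ 2) * u ^ 2) := by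
  have hQ : ∀ x : ℝ, 0 < c ^ 2 + s ^ 2 * x ^ 2 := fun x => by positivity
  have hderiv : ∀ x ∈ uIcc (0:ℝ) 1, HasDerivAt (fun x => x / √(c ^ 2 + s ^ 2 * x ^ 2))
      (c ^ 2 / √(c ^ 2 + s ^ 2 * x ^ 2) ^ 3) x := by
    intro x _
    have hq := sqrt_pos.2 (hQ x)
    have hq2 := sq_sqrt (hQ x).le
    have hdq : HasDerivAt (fun x => √(c ^ 2 + s ^ 2 * x ^ 2))
        (s ^ 2 * (2 * x) / (2 * √(c ^ 2 + s ^ 2 * x ^ 2))) x := by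
      simpa using (((hasDerivAt_pow 2 x).const_mul (s ^ 2)).const_add (c ^ 2)).sqrt (hQ x).ne'
    refine ((hasDerivAt_id' x).div hdq hq.ne').congr_deriv ?_
    field_simp
    linear_combination hq2
  have hcont : ContinuousOn (fun x => c ^ 2 / √(c ^ 2 + s ^ 2 * x ^ 2) ^ 3) (uIcc 0 1) :=
    continuousOn_const.div (Continuous.continuousOn (by fun_prop))
      fun x _ => (pow_pos (sqrt_pos.2 (hQ x)) 3).ne'
  have hmaps : (fun x => x / √(c ^ 2 + s ^ 2 * x ^ 2)) '' uIcc 0 1 ⊆ Icc (-1) 1 := by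
    rintro _ ⟨x, hx, rfl⟩
    rw [uIcc_of_le zero_le_one] at hx
    have hq := sqrt_pos.2 (hQ x)
    have hx2 : x ^ 2 ≤ 1 := pow_le_one₀ hx.1 hx.2
    have hxq : x ≤ √(c ^ 2 + s ^ 2 * x ^ 2) :=
      le_sqrt_of_sq_le (by nlinarith [mul_nonneg (sq_nonneg c) (sub_nonneg.2 hx2)])
    exact ⟨by linarith [div_nonneg hx.1 hq.le], div_le_one_of_le₀ hxq hq.le⟩
  have hm : s ^ 2 + t ^ 2 * c ^ 2 < 1 := by nlinarith [pow_pos hc 2]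
  have hsubst := integral_comp_mul_deriv' hderiv hcont
    ((continuousOn_one_div_one_sub_mul_sq (by positivity) hm).mono hmaps)
  simp only [zero_div, one_pow, mul_one, hcs, sqrt_one, div_one] at hsubst
  rw [← hsubst]
  refine integral_congr fun x hx => ?_
  rw [uIcc_of_le zero_le_one] at hx
  have hq := sqrt_pos.2 (hQ x)
  have hq2 := sq_sqrt (hQ x).le
  have htx := one_sub_mul_sq_pos (sq_nonneg t) ht (pow_le_one₀ hx.1 hx.2)
  have hden : 1 - (s ^ 2 + t ^ 2 * c ^ 2) * (x / √(c ^ 2 + s ^ 2 * x ^ 2)) ^ 2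
      = c ^ 2 * (1 - t ^ 2 * x ^ 2) / √(c ^ 2 + s ^ 2 * x ^ 2) ^ 2 := by
    field_simp
    linear_combination hq2
  simp only [Function.comp, hden]
  field_simp

theorem integral_one_div_one_sub_mul_sin_sq_mul_cos {t φ : ℝ} (ht : t ^ 2 < 1)
    (hφ : φ ∈ Ioo 0 (π / 2)) :
    ∫ θ in (0:ℝ)..π / 2, 1 / (1 - (sin θ ^ 2 + t ^ 2 * cos θ ^ 2) * sin φ ^ 2) * cos φ
      = π / 2 / √(1 - t ^ 2 * sin φ ^ 2) := by
  have hc : 0 < cos φ := cos_pos_of_mem_Ioo ⟨by linarith [hφ.1, pi_pos], hφ.2⟩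
  have hA : 0 < 1 - t ^ 2 * sin φ ^ 2 := one_sub_mul_sq_pos (sq_nonneg t) ht (sin_sq_le_one φ)
  have hsplit : ∀ θ, 1 - (sin θ ^ 2 + t ^ 2 * cos θ ^ 2) * sin φ ^ 2
      = √(1 - t ^ 2 * sin φ ^ 2) ^ 2 * cos θ ^ 2 + cos φ ^ 2 * sin θ ^ 2 := fun θ => by
    rw [sq_sqrt hA.le]
    linear_combination (-1) * sin_sq_add_cos_sq θ - sin θ ^ 2 * sin_sq_add_cos_sq φ
  simp only [hsplit]
  rw [intervalIntegral.integral_mul_const,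
    integral_one_div_sq_mul_cos_sq_add_sq_mul_sin_sq (sqrt_pos.2 hA) hc]
  field_simp

@[fun_prop]
lemma measurable_ellK : Measurable ellK := by
  have h : ellK = fun x => ∫ θ in Ioc 0 (π / 2), 1 / √(1 - x ^ 2 * sin θ ^ 2) :=
    funext fun x => integral_of_le (by positivity)
  rw [h]
  exact (StronglyMeasurable.integral_prod_right
    (f := fun x θ => 1 / √(1 - x ^ 2 * sin θ ^ 2)) (by fun_prop)).measurable

lemma ellK_nonneg (x : ℝ) : 0 ≤ ellK x :=
  intervalIntegral.integral_nonneg (by positivity) fun θ _ => by positivity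

lemma ofReal_mul_ellK'_eq_setLIntegral {t x : ℝ} (ht : t ^ 2 < 1) (hx : x ∈ Ioo 0 1) :
    ENNReal.ofReal (1 / (1 - t ^ 2 * x ^ 2) * ellK' x)
      = ∫⁻ θ in Ioo 0 (π / 2),
          ENNReal.ofReal (1 / ((1 - t ^ 2 * x ^ 2) * √(cos θ ^ 2 + sin θ ^ 2 * x ^ 2))) := by
  have hx2 : x ^ 2 ≤ 1 := pow_le_one₀ hx.1.le hx.2.le
  have htx := one_sub_mul_sq_pos (sq_nonneg t) ht hx2
  have hQ : ∀ θ, 0 < cos θ ^ 2 + sin θ ^ 2 * x ^ 2 := fun θ => by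
    nlinarith [sin_sq_add_cos_sq θ, mul_nonneg (sq_nonneg (cos θ)) (sub_nonneg.2 hx2),
      pow_pos hx.1 2]
  have hK : ellK' x = ∫ θ in (0:ℝ)..π / 2, 1 / √(cos θ ^ 2 + sin θ ^ 2 * x ^ 2) := by
    refine integral_congr fun θ _ => ?_
    simp only [sq_sqrt (sub_nonneg.2 hx2)]
    congr 2
    linear_combination -sin_sq_add_cos_sq θ
  rw [hK, ← intervalIntegral.integral_const_mul]
  simp only [one_div_mul_one_div]
  refine ofReal_intervalIntegral_eq_setLIntegral_Ioo (by positivity)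
    (Continuous.intervalIntegrable ?_ _ _) fun θ _ => by positivity
  exact continuous_const.div (by fun_prop) fun θ => (mul_pos htx (sqrt_pos.2 (hQ θ))).ne'

lemma setLIntegral_one_div_mul_sqrt_eq_setLIntegral_sin {t θ : ℝ} (ht : t ^ 2 < 1)
    (hθ : θ ∈ Ioo 0 (π / 2)) :
    ∫⁻ x in Ioo 0 1, ENNReal.ofReal (1 / ((1 - t ^ 2 * x ^ 2) * √(cos θ ^ 2 + sin θ ^ 2 * x ^ 2)))
      = ∫⁻ φ in Ioo 0 (π / 2),
          ENNReal.ofReal (1 / (1 - (sin θ ^ 2 + t ^ 2 * cos θ ^ 2) * sin φ ^ 2) * cos φ) := by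
  have hc : 0 < cos θ := cos_pos_of_mem_Ioo ⟨by linarith [hθ.1, pi_pos], hθ.2⟩
  have hm0 : 0 ≤ sin θ ^ 2 + t ^ 2 * cos θ ^ 2 := by positivity
  have hm : sin θ ^ 2 + t ^ 2 * cos θ ^ 2 < 1 := by
    nlinarith [sin_sq_add_cos_sq θ, pow_pos hc 2]
  have htx : ∀ x ∈ Icc (0:ℝ) 1, 0 < 1 - t ^ 2 * x ^ 2 := fun x hx =>
    one_sub_mul_sq_pos (sq_nonneg t) ht (pow_le_one₀ hx.1 hx.2)
  have hQ : ∀ x, 0 < cos θ ^ 2 + sin θ ^ 2 * x ^ 2 := fun x => by positivity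
  have hden : ∀ φ, 0 < 1 - (sin θ ^ 2 + t ^ 2 * cos θ ^ 2) * sin φ ^ 2 := fun φ =>
    one_sub_mul_sq_pos hm0 hm (sin_sq_le_one φ)
  rw [← ofReal_intervalIntegral_eq_setLIntegral_Ioo zero_le_one,
    ← ofReal_intervalIntegral_eq_setLIntegral_Ioo (by positivity),
    integral_one_div_mul_sqrt_eq_integral_one_div_one_sub_mul_sq hc (cos_sq_add_sin_sq θ) ht,
    ← integral_comp_sin_mul_cos (continuousOn_one_div_one_sub_mul_sq hm0 hm)]
  · refine Continuous.intervalIntegrable ?_ _ _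
    exact (continuous_const.div (by fun_prop) fun φ => (hden φ).ne').mul continuous_cos
  · exact fun φ hφ => mul_nonneg (one_div_pos.2 (hden φ)).le
      (cos_nonneg_of_mem_Icc ⟨by linarith [hφ.1, pi_pos], hφ.2.le⟩)
  · exact ContinuousOn.intervalIntegrable (continuousOn_const.div (by fun_prop)
      fun x hx => (mul_pos (htx x (by simpa using hx)) (sqrt_pos.2 (hQ x))).ne')
  · exact fun x hx => by have := htx x (Ioo_subset_Icc_self hx); positivity

lemma setLIntegral_one_div_one_sub_mul_sin_sq_mul_cos {t φ : ℝ} (ht : t ^ 2 < 1)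
    (hφ : φ ∈ Ioo 0 (π / 2)) :
    ∫⁻ θ in Ioo 0 (π / 2),
        ENNReal.ofReal (1 / (1 - (sin θ ^ 2 + t ^ 2 * cos θ ^ 2) * sin φ ^ 2) * cos φ)
      = ENNReal.ofReal (π / 2 / √(1 - t ^ 2 * sin φ ^ 2)) := by
  have hc : 0 < cos φ := cos_pos_of_mem_Ioo ⟨by linarith [hφ.1, pi_pos], hφ.2⟩
  have hden : ∀ θ, 0 < 1 - (sin θ ^ 2 + t ^ 2 * cos θ ^ 2) * sin φ ^ 2 := fun θ => by
    have hm : sin θ ^ 2 + t ^ 2 * cos θ ^ 2 ≤ 1 := by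
      nlinarith [sin_sq_add_cos_sq θ, mul_le_mul_of_nonneg_right ht.le (sq_nonneg (cos θ))]
    nlinarith [sin_sq_add_cos_sq φ, pow_pos hc 2, mul_le_mul_of_nonneg_right hm (sq_nonneg (sin φ))]
  rw [← integral_one_div_one_sub_mul_sin_sq_mul_cos ht hφ]
  refine (ofReal_intervalIntegral_eq_setLIntegral_Ioo (by positivity)
    (Continuous.intervalIntegrable ?_ _ _) fun θ _ => by have := hden θ; positivity).symm
  exact (continuous_const.div (by fun_prop) fun θ => (hden θ).ne').mul continuous_const

lemma setLIntegral_div_sqrt_eq_ofReal_mul_ellK {t : ℝ} (ht : t ^ 2 < 1) :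
    ∫⁻ φ in Ioo 0 (π / 2), ENNReal.ofReal (π / 2 / √(1 - t ^ 2 * sin φ ^ 2))
      = ENNReal.ofReal (π / 2 * ellK t) := by
  have hA : ∀ φ, 0 < 1 - t ^ 2 * sin φ ^ 2 := fun φ =>
    one_sub_mul_sq_pos (sq_nonneg t) ht (sin_sq_le_one φ)
  rw [ellK, ← intervalIntegral.integral_const_mul]
  simp only [mul_one_div]
  refine (ofReal_intervalIntegral_eq_setLIntegral_Ioo (by positivity)
    (Continuous.intervalIntegrable ?_ _ _) fun φ _ => by have := hA φ; positivity).symm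
  exact continuous_const.div (by fun_prop) fun φ => (sqrt_pos.2 (hA φ)).ne'

lemma setLIntegral_ofReal_mul_ellK' {t : ℝ} (ht : t ^ 2 < 1) :
    ∫⁻ x in Ioo 0 1, ENNReal.ofReal (1 / (1 - t ^ 2 * x ^ 2) * ellK' x)
      = ENNReal.ofReal (π / 2 * ellK t) := calc
  _ = ∫⁻ x in Ioo 0 1, ∫⁻ θ in Ioo 0 (π / 2),
        ENNReal.ofReal (1 / ((1 - t ^ 2 * x ^ 2) * √(cos θ ^ 2 + sin θ ^ 2 * x ^ 2))) :=
      setLIntegral_congr_fun measurableSet_Ioo fun x hx => ofReal_mul_ellK'_eq_setLIntegral ht hx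
  _ = ∫⁻ θ in Ioo 0 (π / 2), ∫⁻ x in Ioo 0 1,
        ENNReal.ofReal (1 / ((1 - t ^ 2 * x ^ 2) * √(cos θ ^ 2 + sin θ ^ 2 * x ^ 2))) :=
      lintegral_lintegral_swap (Measurable.aemeasurable (by fun_prop))
  _ = ∫⁻ θ in Ioo 0 (π / 2), ∫⁻ φ in Ioo 0 (π / 2),
        ENNReal.ofReal (1 / (1 - (sin θ ^ 2 + t ^ 2 * cos θ ^ 2) * sin φ ^ 2) * cos φ) :=
      setLIntegral_congr_fun measurableSet_Ioo fun θ hθ =>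
        setLIntegral_one_div_mul_sqrt_eq_setLIntegral_sin ht hθ
  _ = ∫⁻ φ in Ioo 0 (π / 2), ∫⁻ θ in Ioo 0 (π / 2),
        ENNReal.ofReal (1 / (1 - (sin θ ^ 2 + t ^ 2 * cos θ ^ 2) * sin φ ^ 2) * cos φ) :=
      lintegral_lintegral_swap (Measurable.aemeasurable (by fun_prop))
  _ = ∫⁻ φ in Ioo 0 (π / 2), ENNReal.ofReal (π / 2 / √(1 - t ^ 2 * sin φ ^ 2)) :=
      setLIntegral_congr_fun measurableSet_Ioo fun φ hφ =>
        setLIntegral_one_div_one_sub_mul_sin_sq_mul_cos ht hφ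
  _ = ENNReal.ofReal (π / 2 * ellK t) := setLIntegral_div_sqrt_eq_ofReal_mul_ellK ht

theorem stmt_9 : ∀ t : ℝ, 0 ≤ t → t < 1 →
    (∫ x in (0:ℝ)..1, (1 / (1 - t^2 * x^2)) * ellK' x) = (π / 2) * ellK t := by
  intro t ht0 ht1
  have ht : t ^ 2 < 1 := by nlinarith
  have hnonneg : ∀ x ∈ Ioo (0:ℝ) 1, 0 ≤ 1 / (1 - t ^ 2 * x ^ 2) * ellK' x := fun x hx =>
    mul_nonneg (one_div_pos.2 (one_sub_mul_sq_pos (sq_nonneg t) ht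
      (pow_le_one₀ hx.1.le hx.2.le))).le (ellK_nonneg _)
  rw [integral_of_le zero_le_one, integral_Ioc_eq_integral_Ioo,
    integral_eq_lintegral_of_nonneg_ae ((ae_restrict_iff' measurableSet_Ioo).2
      (Filter.Eventually.of_forall hnonneg))
      (Measurable.aestronglyMeasurable (by unfold ellK'; fun_prop)),
    setLIntegral_ofReal_mul_ellK' ht, ENNReal.toReal_ofReal (by have := ellK_nonneg t; positivity)]
end
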